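/- arXiv:2107.08109 — 3 statements merged into one kernel-verified Lean document; each statement's English description precedes it below -/
import Mathlib

section
/- Let 𝒳 be a rearrangement-invariant Banach function space over a non-atomic probability space with 𝒳 ≠ L^∞, and let 𝒳_a = {X ∈ 𝒳 : lim_{ℙ(A)→0} ‖X·1_A‖ = 0}. Define ρ : 𝒳 → ℝ by ρ(X) = d(X⁻, 𝒳_a) − E[X], where d denotes distance in the norm of 𝒳. Then ρ is subadditive: ρ(X₁ + X₂) ≤ ρ(X₁) + ρ(X₂) for all X₁, X₂ ∈ 𝒳. -/
open MeasureTheory Filter Set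

/-- A rearrangement-invariant Banach function space over a measure space,
encoded as a set of (everywhere-defined) random variables together with a norm. -/
structure RISpace {Ω : Type} [MeasurableSpace Ω] (μ : Measure Ω) where
  carrier : Set (Ω → ℝ)
  N : (Ω → ℝ) → ℝ
  zero_mem : (0 : Ω → ℝ) ∈ carrier
  add_mem : ∀ {X Y : Ω → ℝ}, X ∈ carrier → Y ∈ carrier → X + Y ∈ carrier
  smul_mem : ∀ (c : ℝ) {X : Ω → ℝ}, X ∈ carrier → c • X ∈ carrier
  nontrivial : ∃ X ∈ carrier, ¬ (X =ᵐ[μ] 0)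
  aemeasurable : ∀ X ∈ carrier, AEMeasurable X μ
  norm_nonneg' : ∀ X : Ω → ℝ, 0 ≤ N X
  norm_zero' : N 0 = 0
  norm_triangle : ∀ X Y : Ω → ℝ, X ∈ carrier → Y ∈ carrier → N (X + Y) ≤ N X + N Y
  norm_smul' : ∀ (c : ℝ) (X : Ω → ℝ), N (c • X) = |c| * N X
  solid : ∀ X ∈ carrier, ∀ Y : Ω → ℝ, AEMeasurable Y μ →
    (∀ᵐ ω ∂μ, |Y ω| ≤ |X ω|) → Y ∈ carrier ∧ N Y ≤ N X
  ri : ∀ X ∈ carrier, ∀ Z : Ω → ℝ, AEMeasurable Z μ →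
    μ.map Z = μ.map X → Z ∈ carrier ∧ N Z = N X
  integrable' : ∀ X ∈ carrier, Integrable X μ
  const_mem : ∀ c : ℝ, (fun _ => c) ∈ carrier
  norm_le_L1 : ∃ C > 0, ∀ X ∈ carrier, ∫ ω, |X ω| ∂μ ≤ C * N X
  complete : ∀ f : ℕ → (Ω → ℝ), (∀ n, f n ∈ carrier) →
    (∀ ε : ℝ, 0 < ε → ∃ M : ℕ, ∀ m n : ℕ, M ≤ m → M ≤ n → N (f m - f n) < ε) →
    ∃ g ∈ carrier, Tendsto (fun n => N (f n - g)) atTop (nhds 0)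

namespace RISpace

variable {Ω : Type} [MeasurableSpace Ω] {μ : Measure Ω}

/-- The set of (a.e.) bounded random variables, i.e. `L^∞`. -/
def Linfty (μ : Measure Ω) : Set (Ω → ℝ) := {X | ∃ C : ℝ, ∀ᵐ ω ∂μ, |X ω| ≤ C}

/-- The order continuous part `𝒳_a` of `𝒳`:
members whose norm vanishes along sets of small measure. -/
def oc (S : RISpace μ) : Set (Ω → ℝ) :=
  {X | X ∈ S.carrier ∧ ∀ ε : ℝ, 0 < ε → ∃ δ : ℝ, 0 < δ ∧
    ∀ A : Set Ω, MeasurableSet A → μ A < ENNReal.ofReal δ → S.N (A.indicator X) < ε}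

/-- Distance from `X` to a set `𝒜` in the norm of `𝒳`. -/
noncomputable def distTo (S : RISpace μ) (X : Ω → ℝ) (𝒜 : Set (Ω → ℝ)) : ℝ :=
  sInf ((fun V => S.N (X - V)) '' 𝒜)

/-- The negative part `X⁻ = max (−X, 0)` of a random variable. -/
def negp (X : Ω → ℝ) : Ω → ℝ := fun ω => max (-X ω) 0

/-- The risk measure `ρ(X) = d(X⁻, 𝒳_a) − E[X]` of Example 2.1. -/
noncomputable def rho (S : RISpace μ) (X : Ω → ℝ) : ℝ :=
  S.distTo (negp X) S.oc - ∫ ω, X ω ∂μ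

end RISpace

/-!
`X ↦ X⁻` is subadditive and `E` is linear, so it suffices that `Y ↦ d(Y, 𝒳_a)` is monotone on
nonnegative variables (because `𝒳_a` is solid) and subadditive (because `𝒳_a` is closed under
addition).
-/

lemma abs_min_max_zero_le {y : ℝ} (v : ℝ) (hy : 0 ≤ y) : |min y (max v 0)| ≤ |v| := by
  rw [abs_of_nonneg (le_min hy (le_max_right _ _))]
  exact (min_le_right _ _).trans (max_le (le_abs_self v) (abs_nonneg v))

lemma abs_sub_min_max_zero_le {y z : ℝ} (v : ℝ) (hy : 0 ≤ y) (hyz : y ≤ z) :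
    |y - min y (max v 0)| ≤ |z - v| := by
  rw [abs_le]
  constructor <;> cases min_cases y (max v 0) <;> cases max_cases v 0 <;>
    linarith [le_abs_self (z - v), neg_abs_le (z - v)]

namespace RISpace

section NegativePart

variable {Ω : Type}

lemma negp_nonneg (X : Ω → ℝ) : 0 ≤ negp X := fun _ => le_max_right _ _

lemma negp_add_le (X₁ X₂ : Ω → ℝ) : negp (X₁ + X₂) ≤ negp X₁ + negp X₂ := fun ω =>
  max_le (by rw [Pi.add_apply, neg_add]; exact add_le_add (le_max_left _ _) (le_max_left _ _))
    (add_nonneg (le_max_right _ _) (le_max_right _ _))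

end NegativePart

variable {Ω : Type} [MeasurableSpace Ω] {μ : Measure Ω} (S : RISpace μ)

lemma aemeasurable_negp {X : Ω → ℝ} (hX : AEMeasurable X μ) : AEMeasurable (negp X) μ :=
  hX.neg.max aemeasurable_const

lemma sub_mem {X V : Ω → ℝ} (hX : X ∈ S.carrier) (hV : V ∈ S.carrier) :
    X - V ∈ S.carrier := by
  simpa [sub_eq_add_neg] using S.add_mem hX (S.smul_mem (-1) hV)

lemma indicator_mem {X : Ω → ℝ} (hX : X ∈ S.carrier) {A : Set Ω} (hA : MeasurableSet A) :
    A.indicator X ∈ S.carrier :=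
  (S.solid X hX _ ((S.aemeasurable X hX).indicator hA) (ae_of_all _ fun ω => by
    by_cases h : ω ∈ A <;> simp [h])).1

lemma negp_mem {X : Ω → ℝ} (hX : X ∈ S.carrier) : negp X ∈ S.carrier :=
  (S.solid X hX _ (aemeasurable_negp (S.aemeasurable X hX)) (ae_of_all _ fun ω => by
    rw [abs_of_nonneg (negp_nonneg X ω)]; exact max_le (neg_le_abs _) (abs_nonneg _))).1

lemma zero_mem_oc : (0 : Ω → ℝ) ∈ S.oc :=
  ⟨S.zero_mem, fun ε hε => ⟨1, one_pos, fun A _ _ => by simpa [S.norm_zero'] using hε⟩⟩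

lemma mem_oc_of_abs_le {V W : Ω → ℝ} (hV : V ∈ S.oc) (hW : AEMeasurable W μ)
    (hWV : ∀ ω, |W ω| ≤ |V ω|) : W ∈ S.oc := by
  refine ⟨(S.solid V hV.1 W hW (ae_of_all _ hWV)).1, fun ε hε => ?_⟩
  obtain ⟨δ, hδ, hV_small⟩ := hV.2 ε hε
  refine ⟨δ, hδ, fun A hA hAδ => lt_of_le_of_lt ?_ (hV_small A hA hAδ)⟩
  refine (S.solid _ (S.indicator_mem hV.1 hA) _ (hW.indicator hA) (ae_of_all _ fun ω => ?_)).2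
  by_cases h : ω ∈ A <;> simp [h, hWV ω]

lemma add_mem_oc {V W : Ω → ℝ} (hV : V ∈ S.oc) (hW : W ∈ S.oc) : V + W ∈ S.oc := by
  refine ⟨S.add_mem hV.1 hW.1, fun ε hε => ?_⟩
  obtain ⟨δ₁, hδ₁, hV_small⟩ := hV.2 (ε / 2) (half_pos hε)
  obtain ⟨δ₂, hδ₂, hW_small⟩ := hW.2 (ε / 2) (half_pos hε)
  refine ⟨min δ₁ δ₂, lt_min hδ₁ hδ₂, fun A hA hAδ => ?_⟩
  have h₁ := hV_small A hA (hAδ.trans_le (ENNReal.ofReal_le_ofReal (min_le_left _ _)))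
  have h₂ := hW_small A hA (hAδ.trans_le (ENNReal.ofReal_le_ofReal (min_le_right _ _)))
  rw [indicator_add']
  linarith [S.norm_triangle _ _ (S.indicator_mem hV.1 hA) (S.indicator_mem hW.1 hA)]

lemma distTo_le {X V : Ω → ℝ} {𝒜 : Set (Ω → ℝ)} (hV : V ∈ 𝒜) : S.distTo X 𝒜 ≤ S.N (X - V) :=
  csInf_le ⟨0, by rintro _ ⟨W, -, rfl⟩; exact S.norm_nonneg' _⟩ ⟨V, hV, rfl⟩

lemma le_distTo {X : Ω → ℝ} {𝒜 : Set (Ω → ℝ)} {c : ℝ} (h𝒜 : 𝒜.Nonempty)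
    (hc : ∀ V ∈ 𝒜, c ≤ S.N (X - V)) : c ≤ S.distTo X 𝒜 :=
  le_csInf (h𝒜.image _) (by rintro _ ⟨V, hV, rfl⟩; exact hc V hV)

lemma distTo_oc_add_le {Z₁ Z₂ : Ω → ℝ} (hZ₁ : Z₁ ∈ S.carrier) (hZ₂ : Z₂ ∈ S.carrier) :
    S.distTo (Z₁ + Z₂) S.oc ≤ S.distTo Z₁ S.oc + S.distTo Z₂ S.oc := by
  rw [← sub_le_iff_le_add]
  refine S.le_distTo ⟨0, S.zero_mem_oc⟩ fun V₁ hV₁ => ?_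
  rw [sub_le_iff_le_add, ← sub_le_iff_le_add']
  refine S.le_distTo ⟨0, S.zero_mem_oc⟩ fun V₂ hV₂ => ?_
  rw [sub_le_iff_le_add']
  calc S.distTo (Z₁ + Z₂) S.oc ≤ S.N ((Z₁ - V₁) + (Z₂ - V₂)) := by
        rw [← add_sub_add_comm]; exact S.distTo_le (S.add_mem_oc hV₁ hV₂)
    _ ≤ S.N (Z₁ - V₁) + S.N (Z₂ - V₂) :=
        S.norm_triangle _ _ (S.sub_mem hZ₁ hV₁.1) (S.sub_mem hZ₂ hV₂.1)

/-- An approximant `V ∈ 𝒳_a` of `Z` truncated to `min Y V⁺` is still in `𝒳_a` (solidity) and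
approximates `Y` at least as well. -/
lemma distTo_oc_le_of_le {Y Z : Ω → ℝ} (hZ : Z ∈ S.carrier) (hY : AEMeasurable Y μ)
    (hY₀ : 0 ≤ Y) (hYZ : Y ≤ Z) : S.distTo Y S.oc ≤ S.distTo Z S.oc := by
  refine S.le_distTo ⟨0, S.zero_mem_oc⟩ fun V hV => ?_
  have hVm := S.aemeasurable V hV.1
  set W : Ω → ℝ := fun ω => min (Y ω) (max (V ω) 0)
  have hW : W ∈ S.oc := S.mem_oc_of_abs_le hV (hY.min (hVm.max aemeasurable_const))
    fun ω => abs_min_max_zero_le _ (hY₀ ω)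
  calc S.distTo Y S.oc ≤ S.N (Y - W) := S.distTo_le hW
    _ ≤ S.N (Z - V) := (S.solid _ (S.sub_mem hZ hV.1) _ (hY.sub (S.aemeasurable W hW.1))
        (ae_of_all _ fun ω => abs_sub_min_max_zero_le _ (hY₀ ω) (hYZ ω))).2

end RISpace

theorem rho_subadditive_general {Ω : Type} [MeasurableSpace Ω] (μ : Measure Ω)
    (S : RISpace μ) :
    ∀ X₁ ∈ S.carrier, ∀ X₂ ∈ S.carrier, S.rho (X₁ + X₂) ≤ S.rho X₁ + S.rho X₂ := by
  intro X₁ hX₁ X₂ hX₂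
  have hdist : S.distTo (RISpace.negp (X₁ + X₂)) S.oc ≤
      S.distTo (RISpace.negp X₁) S.oc + S.distTo (RISpace.negp X₂) S.oc :=
    (S.distTo_oc_le_of_le (S.add_mem (S.negp_mem hX₁) (S.negp_mem hX₂))
      (RISpace.aemeasurable_negp (S.aemeasurable _ (S.add_mem hX₁ hX₂)))
      (RISpace.negp_nonneg _) (RISpace.negp_add_le X₁ X₂)).trans
    (S.distTo_oc_add_le (S.negp_mem hX₁) (S.negp_mem hX₂))
  have hmean : ∫ ω, (X₁ + X₂) ω ∂μ = ∫ ω, X₁ ω ∂μ + ∫ ω, X₂ ω ∂μ :=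
    integral_add (S.integrable' X₁ hX₁) (S.integrable' X₂ hX₂)
  simp only [RISpace.rho]
  rw [hmean]
  linarith

/-- `ρ(X) = d(X⁻, 𝒳_a) − E[X]` is subadditive on an r.i. space `𝒳 ≠ L^∞`
over a non-atomic probability space. -/
theorem rho_subadditive {Ω : Type} [MeasurableSpace Ω] (μ : Measure Ω)
    [IsProbabilityMeasure μ] [NullSingletonClass μ]
    (S : RISpace μ) (hne : S.carrier ≠ RISpace.Linfty μ) :
    ∀ X₁ ∈ S.carrier, ∀ X₂ ∈ S.carrier, S.rho (X₁ + X₂) ≤ S.rho X₁ + S.rho X₂ :=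
  rho_subadditive_general μ S
end

section
/- Let 𝒴 be a vector space and 𝒴^# a vector space of linear functionals separating points of 𝒴. If ρ : 𝒴 → ℝ is convex and σ(𝒴, 𝒴^#) lower semicontinuous at Y₀ ∈ 𝒴, then the biconjugate satisfies ρ**(Y₀) = ρ(Y₀), where ρ*(F) = sup_{Y}(F(Y) − ρ(Y)) and ρ**(Y) = sup_{F ∈ 𝒴^#}(F(Y) − ρ*(F)). -/
/-!
Fenchel–Young gives `ρ**(Y₀) ≤ ρ(Y₀)`. Conversely, fix `c < l < ρ(Y₀)`. Lower semicontinuity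
gives a convex open neighbourhood `V` of `Y₀` on which `ρ > l`, so `V × (-∞, l)` is disjoint from
the epigraph of `ρ`, and Hahn–Banach separates the two by a continuous functional `(y, t) ↦ g y + a t`.
Evaluating at `(Y₀, c)` and `(Y₀, ρ Y₀)` forces `a > 0`, and `-g / a` is then the slope of a
continuous affine minorant of `ρ` exceeding `c` at `Y₀`. The continuous functionals for
`σ(𝒴, D)` are exactly the elements of `D`, hence `ρ**(Y₀) ≥ c`.
-/

open Filter Set

theorem ConvexOn.exists_affine_lt_of_lowerSemicontinuousAt {E : Type*} [AddCommGroup E]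
    [Module ℝ E] [TopologicalSpace E] [IsTopologicalAddGroup E] [ContinuousSMul ℝ E]
    [LocallyConvexSpace ℝ E] {ρ : E → ℝ} (hρ : ConvexOn ℝ univ ρ) {x₀ : E}
    (hlsc : LowerSemicontinuousAt ρ x₀) {c : ℝ} (hc : c < ρ x₀) :
    ∃ φ : StrongDual ℝ E, ∀ y, c + φ (y - x₀) < ρ y := by
  obtain ⟨l, hcl, hlρ⟩ := exists_between hc
  obtain ⟨W, ⟨hW, hWconv⟩, hWρ⟩ :=
    (LocallyConvexSpace.convex_basis (𝕜 := ℝ) x₀).mem_iff.1 (hlsc l hlρ)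
  have hdisj : Disjoint (interior W ×ˢ Iio l) {p : E × ℝ | ρ p.1 ≤ p.2} :=
    disjoint_left.2 fun p hp hpρ =>
      (hWρ (interior_subset hp.1)).not_ge (hpρ.trans (mem_Iio.1 hp.2).le)
  obtain ⟨f, u, hf_lt, hf_ge⟩ := geometric_hahn_banach_open (hWconv.interior.prod (convex_Iio l))
    (isOpen_interior.prod isOpen_Iio) (by simpa using hρ.convex_epigraph) hdisj
  set g := f.comp (ContinuousLinearMap.inl ℝ E ℝ)
  set a := f (0, 1)
  have hf : ∀ y t, f (y, t) = g y + t * a := fun y t => by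
    rw [← smul_eq_mul, ← map_smul, ContinuousLinearMap.comp_apply, ← map_add]
    simp
  have key : ∀ y, g x₀ + c * a < g y + ρ y * a := fun y =>
    calc g x₀ + c * a = f (x₀, c) := (hf _ _).symm
      _ < u := hf_lt _ ⟨mem_interior_iff_mem_nhds.2 hW, hcl⟩
      _ ≤ f (y, ρ y) := hf_ge (y, ρ y) (le_refl (ρ y))
      _ = _ := hf _ _
  have ha : 0 < a :=
    pos_of_mul_pos_right (by linarith [key x₀] : 0 < (ρ x₀ - c) * a) (sub_pos.2 hc).le
  refine ⟨-a⁻¹ • g, fun y => ?_⟩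
  have := key y
  simp only [FunLike.coe_smul, Pi.smul_apply, map_sub, smul_eq_mul]
  field_simp
  linarith

theorem WeakBilin.exists_affine_lt_of_convexOn {E F : Type*} [AddCommGroup E] [Module ℝ E]
    [AddCommGroup F] [Module ℝ F] (B : E →ₗ[ℝ] F →ₗ[ℝ] ℝ) {ρ : E → ℝ}
    (hρ : ConvexOn ℝ univ ρ) {x₀ : E}
    (hlsc : LowerSemicontinuousAt (fun x : WeakBilin B => ρ x) x₀) {c : ℝ}
    (hc : c < ρ x₀) : ∃ f : F, ∀ x, c + B (x - x₀) f < ρ x := by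
  obtain ⟨φ, hφ⟩ :=
    ConvexOn.exists_affine_lt_of_lowerSemicontinuousAt (E := WeakBilin B) hρ hlsc hc
  obtain ⟨f, rfl⟩ := LinearMap.dualEmbedding_surjective B φ
  exact ⟨f, hφ⟩

theorem biconjugate_eq_at_point_general {𝒴 : Type*} [AddCommGroup 𝒴] [Module ℝ 𝒴]
    (D : Submodule ℝ (𝒴 →ₗ[ℝ] ℝ))
    (ρ : 𝒴 → ℝ) (hconv : ConvexOn ℝ Set.univ ρ) (Y₀ : 𝒴)
    (hlsc : @LowerSemicontinuousAt 𝒴 ℝ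
      (TopologicalSpace.induced (fun y (F : D) => (F : 𝒴 →ₗ[ℝ] ℝ) y)
        Pi.topologicalSpace) _ ρ Y₀) :
    (⨆ F : D, (((F : 𝒴 →ₗ[ℝ] ℝ) Y₀ : ℝ) : EReal)
        - ⨆ Y : 𝒴, (((F : 𝒴 →ₗ[ℝ] ℝ) Y - ρ Y : ℝ) : EReal))
      = (ρ Y₀ : EReal) := by
  refine le_antisymm (iSup_le fun F => ?_) (EReal.ge_of_forall_gt_iff_ge.1 fun c hc => ?_)
  · calc _ ≤ ((F.1 Y₀ : ℝ) : EReal) - ((F.1 Y₀ - ρ Y₀ : ℝ) : EReal) :=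
          EReal.sub_le_sub le_rfl (le_iSup_of_le Y₀ le_rfl)
      _ = ρ Y₀ := by rw [← EReal.coe_sub, sub_sub_cancel]
  -- `σ(𝒴, D)` is definitionally the topology of `WeakBilin D.subtype.flip`
  obtain ⟨F, hF⟩ := WeakBilin.exists_affine_lt_of_convexOn (F := D) D.subtype.flip hconv
    (x₀ := Y₀) (by exact hlsc) (EReal.coe_lt_coe_iff.1 hc)
  have hFc : ∀ Y, F.1 Y - ρ Y ≤ F.1 Y₀ - c := fun Y => by
    have := hF Y
    simp only [map_sub, LinearMap.sub_apply, LinearMap.flip_apply, Submodule.subtype_apply]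
      at this
    linarith
  calc (c : EReal) = ((F.1 Y₀ : ℝ) : EReal) - ((F.1 Y₀ - c : ℝ) : EReal) := by
        rw [← EReal.coe_sub, sub_sub_cancel]
    _ ≤ _ := le_iSup_of_le F <|
        EReal.sub_le_sub le_rfl (iSup_le fun Y => EReal.coe_le_coe_iff.2 (hFc Y))

/-- Proposition 4.5 (local Fenchel–Moreau): let `𝒴` be a vector space and `D` a point-
separating space of linear functionals on `𝒴`. If `ρ : 𝒴 → ℝ` is convex and lower
semicontinuous at `Y₀` for the weak topology `σ(𝒴, D)`, then
`ρ**(Y₀) = ρ(Y₀)`, where `ρ*(F) = sup_Y (F(Y) − ρ(Y))` and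
`ρ**(Y) = sup_{F ∈ D} (F(Y) − ρ*(F))` (computed in the extended reals). -/
theorem biconjugate_eq_at_point {𝒴 : Type*} [AddCommGroup 𝒴] [Module ℝ 𝒴]
    (D : Submodule ℝ (𝒴 →ₗ[ℝ] ℝ))
    (hsep : ∀ y : 𝒴, y ≠ 0 → ∃ F ∈ D, F y ≠ 0)
    (ρ : 𝒴 → ℝ) (hconv : ConvexOn ℝ Set.univ ρ) (Y₀ : 𝒴)
    (hlsc : @LowerSemicontinuousAt 𝒴 ℝ
      (TopologicalSpace.induced (fun y (F : D) => (F : 𝒴 →ₗ[ℝ] ℝ) y)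
        Pi.topologicalSpace) _ ρ Y₀) :
    (⨆ F : D, (((F : 𝒴 →ₗ[ℝ] ℝ) Y₀ : ℝ) : EReal)
        - ⨆ Y : 𝒴, (((F : 𝒴 →ₗ[ℝ] ℝ) Y - ρ Y : ℝ) : EReal))
      = (ρ Y₀ : EReal) :=
  biconjugate_eq_at_point_general D ρ hconv Y₀ hlsc
end

section
/- Let 𝒳 be a rearrangement-invariant space over a probability space, ρ : 𝒳 → (−∞, ∞] a decreasing functional and X ∈ 𝒳. Then ρ has the Fatou property at X if and only if: for every Y ∈ 𝒳 with Y ≥ X, every sequence of reals c_n ↓ 0, and every sequence of measurable sets A_n ↓ ∅, setting Y_n = (X + c_n·1)·1_{A_n^c} + Y·1_{A_n}, one has ρ(X) = lim_n ρ(Y_n). -/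
open MeasureTheory Filter Set

/-!
A special sequence `Y_n` lies above `X`, converges to `X` pointwise and is dominated by
`|X| + c₀ + |Y|`; so the Fatou property gives `ρ X ≤ liminf ρ(Y_n)` while monotonicity gives
`ρ(Y_n) ≤ ρ X`.

Conversely, let `Xₙ → X` a.e. with `|Xₙ| ≤ X₀`. Egorov's theorem, with Borel–Cantelli to make the
exceptional sets decrease to `∅`, yields measurable `A_j ↓ ∅` such that for each `j` eventually
`Xₙ ≤ X + 1/(j+1)` a.e. off `A_j`. On `A_j` the variable `Y = |X| + X₀` dominates `Xₙ`, so the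
special sequence `Y_j` eventually lies above `Xₙ`, whence `ρ(Y_j) ≤ liminf ρ(Xₙ)`; letting
`j → ∞` in the criterion gives `ρ X ≤ liminf ρ(Xₙ)`.
-/

open scoped Topology

section Egorov

variable {Ω β : Type*} [MeasurableSpace Ω] {μ : Measure Ω} [PseudoMetricSpace β]
  {f : ℕ → Ω → β} {g : Ω → β}

/-- Egorov's sets of measure `≤ 2⁻ʲ` are summable, so by Borel–Cantelli their tails `⋃ i ≥ j`
decrease to a null set. -/
theorem exists_antitone_measure_iInter_eq_zero_tendstoUniformlyOn_compl [IsFiniteMeasure μ]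
    (hf : ∀ n, StronglyMeasurable (f n)) (hg : StronglyMeasurable g)
    (hfg : ∀ᵐ ω ∂μ, Tendsto (fun n => f n ω) atTop (𝓝 (g ω))) :
    ∃ B : ℕ → Set Ω, (∀ j, MeasurableSet (B j)) ∧ Antitone B ∧ μ (⋂ j, B j) = 0 ∧
      ∀ j, TendstoUniformlyOn f g atTop (B j)ᶜ := by
  choose t ht_meas ht_le ht_unif using fun j : ℕ =>
    tendstoUniformlyOn_of_ae_tendsto' hf hg hfg (pow_pos (one_half_pos (α := ℝ)) j)
  refine ⟨fun j => ⋃ i ≥ j, t i, fun j => .biUnion (to_countable _) fun i _ => ht_meas i,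
    fun j k hjk => biUnion_mono (fun i hi => hjk.trans hi) fun _ _ => subset_rfl, ?_,
    fun j => (ht_unif j).mono (compl_subset_compl.2 fun ω hω => mem_iUnion₂.2 ⟨j, le_rfl, hω⟩)⟩
  have hsum : ∑' i, μ (t i) ≠ ⊤ := by
    refine ne_top_of_le_ne_top ?_ (ENNReal.tsum_le_tsum ht_le)
    rw [← ENNReal.ofReal_tsum_of_nonneg (fun i => by positivity) summable_geometric_two]
    exact ENNReal.ofReal_ne_top
  have := measure_limsup_atTop_eq_zero hsum
  rwa [limsup_eq_iInf_iSup_of_nat] at this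

theorem exists_antitone_iInter_eq_empty_eventually_ae_dist_lt [IsFiniteMeasure μ]
    (hf : ∀ n, AEStronglyMeasurable (f n) μ) (hg : AEStronglyMeasurable g μ)
    (hfg : ∀ᵐ ω ∂μ, Tendsto (fun n => f n ω) atTop (𝓝 (g ω))) :
    ∃ A : ℕ → Set Ω, (∀ j, MeasurableSet (A j)) ∧ Antitone A ∧ ⋂ j, A j = ∅ ∧
      ∀ j, ∀ ε > 0, ∀ᶠ n in atTop, ∀ᵐ ω ∂μ, ω ∉ A j → dist (f n ω) (g ω) < ε := by
  have hf_eq : ∀ᵐ ω ∂μ, ∀ n, f n ω = (hf n).mk _ ω := ae_all_iff.2 fun n => (hf n).ae_eq_mk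
  have hfg_mk : ∀ᵐ ω ∂μ, Tendsto (fun n => (hf n).mk _ ω) atTop (𝓝 (hg.mk g ω)) := by
    filter_upwards [hfg, hf_eq, hg.ae_eq_mk] with ω hω hfω hgω
    simpa only [← hfω, ← hgω] using hω
  obtain ⟨B, hB_meas, hB_anti, hB_null, hB_unif⟩ :=
    exists_antitone_measure_iInter_eq_zero_tendstoUniformlyOn_compl
      (fun n => (hf n).stronglyMeasurable_mk) hg.stronglyMeasurable_mk hfg_mk
  -- Removing the null set `⋂ B` makes the intersection empty without affecting a.e. statements.
  refine ⟨fun j => B j \ ⋂ i, B i, fun j => (hB_meas j).diff (.iInter hB_meas),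
    fun j k hjk => sdiff_subset_sdiff_left (hB_anti hjk), ?_, fun j ε hε => ?_⟩
  · refine eq_empty_iff_forall_notMem.2 fun ω hω => ?_
    rw [mem_iInter] at hω
    exact (hω 0).2 (mem_iInter.2 fun i => (hω i).1)
  · filter_upwards [Metric.tendstoUniformlyOn_iff.1 (hB_unif j) ε hε] with n hn
    filter_upwards [hf_eq, hg.ae_eq_mk, measure_eq_zero_iff_ae_notMem.1 hB_null]
      with ω hfω hgω hω_notMem hω
    rw [hfω, hgω, dist_comm]
    exact hn ω fun hωB => hω ⟨hωB, hω_notMem⟩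

end Egorov

section Patch

variable {Ω : Type*} {X Y : Ω → ℝ} {r : ℝ} {A : Set Ω} {ω : Ω}

/-- The paper's special sequence `Y_n = (X + c_n·1)·1_{A_nᶜ} + Y·1_{A_n}` is
`patch X Y (c n) (A n)`. -/
noncomputable def patch (X Y : Ω → ℝ) (r : ℝ) (A : Set Ω) : Ω → ℝ :=
  Aᶜ.indicator (fun ω => X ω + r) + A.indicator Y

theorem patch_of_mem (h : ω ∈ A) : patch X Y r A ω = Y ω := by
  simp [patch, h]

theorem patch_of_notMem (h : ω ∉ A) : patch X Y r A ω = X ω + r := by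
  simp [patch, h]

theorem abs_patch_le : |patch X Y r A ω| ≤ |X ω| + |r| + |Y ω| := by
  by_cases h : ω ∈ A
  · rw [patch_of_mem h]
    linarith [abs_nonneg (X ω), abs_nonneg r]
  · rw [patch_of_notMem h]
    linarith [abs_add_le (X ω) r, abs_nonneg (Y ω)]

theorem le_patch (hXY : X ω ≤ Y ω) (hr : 0 ≤ r) : X ω ≤ patch X Y r A ω := by
  by_cases h : ω ∈ A
  · rwa [patch_of_mem h]
  · rw [patch_of_notMem h]
    linarith

theorem le_patch_of_le {Z : Ω → ℝ} (hZY : Z ω ≤ Y ω) (hZX : ω ∉ A → Z ω ≤ X ω + r) :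
    Z ω ≤ patch X Y r A ω := by
  by_cases h : ω ∈ A
  · rwa [patch_of_mem h]
  · rw [patch_of_notMem h]
    exact hZX h

theorem tendsto_patch {c : ℕ → ℝ} {A : ℕ → Set Ω} (hc : Tendsto c atTop (𝓝 0))
    (hA : Antitone A) (hA_empty : ⋂ n, A n = ∅) (ω : Ω) :
    Tendsto (fun n => patch X Y (c n) (A n) ω) atTop (𝓝 (X ω)) := by
  obtain ⟨m, hm⟩ : ∃ m, ω ∉ A m := by
    have : ω ∉ ⋂ n, A n := hA_empty ▸ notMem_empty ω
    simpa using this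
  have hlim : Tendsto (fun n => X ω + c n) atTop (𝓝 (X ω)) := by
    simpa using tendsto_const_nhds.add hc
  exact hlim.congr' (eventually_atTop.2 ⟨m, fun n hn =>
    (patch_of_notMem fun h => hm (hA hn h)).symm⟩)

end Patch

namespace RISpace

variable {Ω : Type} [MeasurableSpace Ω] {μ : Measure Ω} (S : RISpace μ)

theorem abs_mem {X : Ω → ℝ} (hX : X ∈ S.carrier) : (fun ω => |X ω|) ∈ S.carrier :=
  (S.solid X hX _ (continuous_abs.measurable.comp_aemeasurable (S.aemeasurable X hX))
    (.of_forall fun ω => by simp)).1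

theorem abs_add_const_add_abs_mem {X Y : Ω → ℝ} (hX : X ∈ S.carrier) (hY : Y ∈ S.carrier)
    (r : ℝ) : (fun ω => |X ω| + |r| + |Y ω|) ∈ S.carrier :=
  S.add_mem (S.add_mem (S.abs_mem hX) (S.const_mem |r|)) (S.abs_mem hY)

theorem patch_mem {X Y : Ω → ℝ} (hX : X ∈ S.carrier) (hY : Y ∈ S.carrier) (r : ℝ)
    {A : Set Ω} (hA : MeasurableSet A) : patch X Y r A ∈ S.carrier := by
  refine (S.solid _ (S.abs_add_const_add_abs_mem hX hY r) _ ?_ (.of_forall fun ω => ?_)).1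
  · exact (((S.aemeasurable X hX).add aemeasurable_const).indicator hA.compl).add
      ((S.aemeasurable Y hY).indicator hA)
  · exact abs_patch_le.trans (le_abs_self _)

def FatouAt (ρ : (Ω → ℝ) → EReal) (X : Ω → ℝ) : Prop :=
  ∀ Xseq : ℕ → Ω → ℝ, (∀ n, Xseq n ∈ S.carrier) →
    (∀ᵐ ω ∂μ, Tendsto (fun n => Xseq n ω) atTop (𝓝 (X ω))) →
    (∃ X₀ ∈ S.carrier, ∀ n, ∀ᵐ ω ∂μ, |Xseq n ω| ≤ X₀ ω) →
    ρ X ≤ liminf (fun n => ρ (Xseq n)) atTop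

variable {S} {ρ : (Ω → ℝ) → EReal} {X : Ω → ℝ}

theorem FatouAt.tendsto_comp_patch
    (hdec : ∀ X₁ ∈ S.carrier, ∀ X₂ ∈ S.carrier, (∀ᵐ ω ∂μ, X₂ ω ≤ X₁ ω) → ρ X₁ ≤ ρ X₂)
    (hX : X ∈ S.carrier) (hF : S.FatouAt ρ X) {Y : Ω → ℝ} (hY : Y ∈ S.carrier)
    (hXY : ∀ᵐ ω ∂μ, X ω ≤ Y ω) {c : ℕ → ℝ} (hc_anti : Antitone c) (hc : Tendsto c atTop (𝓝 0))
    {A : ℕ → Set Ω} (hA_meas : ∀ n, MeasurableSet (A n)) (hA_anti : Antitone A)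
    (hA_empty : ⋂ n, A n = ∅) :
    Tendsto (fun n => ρ (patch X Y (c n) (A n))) atTop (𝓝 (ρ X)) := by
  have hc_nonneg : ∀ n, 0 ≤ c n := hc_anti.le_of_tendsto hc
  have hmem : ∀ n, patch X Y (c n) (A n) ∈ S.carrier := fun n =>
    S.patch_mem hX hY (c n) (hA_meas n)
  have hle : ∀ n, ρ (patch X Y (c n) (A n)) ≤ ρ X := fun n =>
    hdec _ (hmem n) _ hX (hXY.mono fun ω h => le_patch h (hc_nonneg n))
  have hdom : ∀ n, ∀ᵐ ω ∂μ, |patch X Y (c n) (A n) ω| ≤ |X ω| + |c 0| + |Y ω| := by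
    refine fun n => .of_forall fun ω => abs_patch_le.trans ?_
    rw [abs_of_nonneg (hc_nonneg n), abs_of_nonneg (hc_nonneg 0)]
    linarith [hc_anti (Nat.zero_le n)]
  have hfatou : ρ X ≤ liminf (fun n => ρ (patch X Y (c n) (A n))) atTop :=
    hF _ hmem (.of_forall (tendsto_patch hc hA_anti hA_empty))
      ⟨_, S.abs_add_const_add_abs_mem hX hY (c 0), hdom⟩
  exact tendsto_of_le_liminf_of_limsup_le hfatou
    (limsup_le_of_le (by isBoundedDefault) (.of_forall hle))

theorem fatouAt_of_tendsto_patch [IsFiniteMeasure μ]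
    (hdec : ∀ X₁ ∈ S.carrier, ∀ X₂ ∈ S.carrier, (∀ᵐ ω ∂μ, X₂ ω ≤ X₁ ω) → ρ X₁ ≤ ρ X₂)
    (hX : X ∈ S.carrier)
    (h : ∀ Y ∈ S.carrier, (∀ᵐ ω ∂μ, X ω ≤ Y ω) →
      ∀ c : ℕ → ℝ, Antitone c → Tendsto c atTop (𝓝 0) →
      ∀ A : ℕ → Set Ω, (∀ n, MeasurableSet (A n)) → Antitone A → ⋂ n, A n = ∅ →
      Tendsto (fun n => ρ (patch X Y (c n) (A n))) atTop (𝓝 (ρ X))) :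
    S.FatouAt ρ X := by
  rintro Xseq hmem hlim ⟨X₀, hX₀, hdom⟩
  obtain ⟨A, hA_meas, hA_anti, hA_empty, hA_unif⟩ :=
    exists_antitone_iInter_eq_empty_eventually_ae_dist_lt
      (fun n => (S.aemeasurable _ (hmem n)).aestronglyMeasurable)
      (S.aemeasurable X hX).aestronglyMeasurable hlim
  set c : ℕ → ℝ := fun j => 1 / ((j : ℝ) + 1)
  have hc_pos : ∀ j, 0 < c j := fun j => by positivity
  have hc_anti : Antitone c := fun j k hjk => by
    simp only [c]
    gcongr
  set Y : Ω → ℝ := fun ω => |X ω| + X₀ ω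
  have hY : Y ∈ S.carrier := S.add_mem (S.abs_mem hX) hX₀
  have hXY : ∀ᵐ ω ∂μ, X ω ≤ Y ω := (hdom 0).mono fun ω h => by
    linarith [le_abs_self (X ω), abs_nonneg (Xseq 0 ω)]
  have hpatch_le : ∀ j, ρ (patch X Y (c j) (A j)) ≤ liminf (fun n => ρ (Xseq n)) atTop := by
    refine fun j => le_liminf_of_le (by isBoundedDefault) ?_
    filter_upwards [hA_unif j (c j) (hc_pos j)] with n hn
    refine hdec _ (S.patch_mem hX hY _ (hA_meas j)) _ (hmem n) ?_
    filter_upwards [hn, hdom n] with ω hω hω₀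
    refine le_patch_of_le ?_ fun hωA => ?_
    · linarith [le_abs_self (Xseq n ω), abs_nonneg (X ω)]
    · linarith [(abs_lt.1 (Real.dist_eq _ _ ▸ hω hωA)).2]
  exact le_of_tendsto' (h Y hY hXY c hc_anti
    tendsto_one_div_add_atTop_nhds_zero_nat A hA_meas hA_anti hA_empty) hpatch_le

end RISpace

theorem fatou_iff_special_sequences_general {Ω : Type} [MeasurableSpace Ω] (μ : Measure Ω)
    [IsProbabilityMeasure μ]
    (S : RISpace μ) (ρ : (Ω → ℝ) → EReal)
    (hdec : ∀ X₁ ∈ S.carrier, ∀ X₂ ∈ S.carrier, (∀ᵐ ω ∂μ, X₂ ω ≤ X₁ ω) → ρ X₁ ≤ ρ X₂)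
    (X : Ω → ℝ) (hX : X ∈ S.carrier) :
    -- Fatou property at X
    ((∀ Xseq : ℕ → Ω → ℝ, (∀ n, Xseq n ∈ S.carrier) →
        (∀ᵐ ω ∂μ, Tendsto (fun n => Xseq n ω) atTop (nhds (X ω))) →
        (∃ X₀ ∈ S.carrier, ∀ n, ∀ᵐ ω ∂μ, |Xseq n ω| ≤ X₀ ω) →
        ρ X ≤ Filter.liminf (fun n => ρ (Xseq n)) atTop)
      ↔
    -- the special-sequence criterion
      (∀ Y ∈ S.carrier, (∀ᵐ ω ∂μ, X ω ≤ Y ω) →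
        ∀ c : ℕ → ℝ, Antitone c → Tendsto c atTop (nhds 0) →
        ∀ A : ℕ → Set Ω, (∀ n, MeasurableSet (A n)) → Antitone A → (⋂ n, A n) = ∅ →
        Tendsto
          (fun n => ρ ((A n)ᶜ.indicator (fun ω => X ω + c n) + (A n).indicator Y))
          atTop (nhds (ρ X)))) :=
  ⟨fun hF _ hY hXY _ hc_anti hc _ hA_meas hA_anti hA_empty =>
    RISpace.FatouAt.tendsto_comp_patch hdec hX hF hY hXY hc_anti hc hA_meas hA_anti hA_empty,
   RISpace.fatouAt_of_tendsto_patch hdec hX⟩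

/-- Lemma 3.1: for a decreasing functional `ρ : 𝒳 → (−∞,∞]` on an r.i. space over a
probability space and `X ∈ 𝒳`, the Fatou property at `X` is equivalent to:
for every `Y ∈ 𝒳` with `Y ≥ X`, every `c_n ↓ 0` and every `A_n ↓ ∅`, with
`Y_n = (X + c_n·1)·1_{A_nᶜ} + Y·1_{A_n}`, one has `ρ(X) = lim_n ρ(Y_n)`. -/
theorem fatou_iff_special_sequences {Ω : Type} [MeasurableSpace Ω] (μ : Measure Ω)
    [IsProbabilityMeasure μ]
    (S : RISpace μ) (ρ : (Ω → ℝ) → EReal)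
    (hproper : ∀ X ∈ S.carrier, ρ X ≠ ⊥)
    (hdec : ∀ X₁ ∈ S.carrier, ∀ X₂ ∈ S.carrier, (∀ᵐ ω ∂μ, X₂ ω ≤ X₁ ω) → ρ X₁ ≤ ρ X₂)
    (X : Ω → ℝ) (hX : X ∈ S.carrier) :
    -- Fatou property at X
    ((∀ Xseq : ℕ → Ω → ℝ, (∀ n, Xseq n ∈ S.carrier) →
        (∀ᵐ ω ∂μ, Tendsto (fun n => Xseq n ω) atTop (nhds (X ω))) →
        (∃ X₀ ∈ S.carrier, ∀ n, ∀ᵐ ω ∂μ, |Xseq n ω| ≤ X₀ ω) →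
        ρ X ≤ Filter.liminf (fun n => ρ (Xseq n)) atTop)
      ↔
    -- the special-sequence criterion
      (∀ Y ∈ S.carrier, (∀ᵐ ω ∂μ, X ω ≤ Y ω) →
        ∀ c : ℕ → ℝ, Antitone c → Tendsto c atTop (nhds 0) →
        ∀ A : ℕ → Set Ω, (∀ n, MeasurableSet (A n)) → Antitone A → (⋂ n, A n) = ∅ →
        Tendsto
          (fun n => ρ ((A n)ᶜ.indicator (fun ω => X ω + c n) + (A n).indicator Y))
          atTop (nhds (ρ X)))) :=
  fatou_iff_special_sequences_general μ S ρ hdec X hX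
end
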